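/- arXiv:1010.3354 — 2 statements merged into one kernel-verified Lean document; each statement's English description precedes it below -/
import Mathlib

section
/- If f : ℝ → ℝ is a nonnegative Lebesgue-integrable function (not necessarily continuous), then for almost every x ∈ ℝ, the sequence f(n·x) tends to 0 as n → ∞ through the positive integers. -/
open MeasureTheory Filter Set
open scoped ENNReal Topology

/-!
On an annulus `a < |x| ≤ b` with `0 < a`, the substitution `y = (n + 1) x` gives
`∑ₙ ∫_{a<|x|≤b} g((n+1)x) dx = ∫ g(y) ∑ₙ (n+1)⁻¹ 1[a < |y|/(n+1) ≤ b] dy ≤ (b/a) ∫ g`,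
because fewer than `|y|/a` indices contribute, each at most `b/|y|`. So `∑ₙ g((n+1)x)` is finite
for almost every `x` in the annulus, and its terms tend to `0`. Countably many annuli cover
`ℝ \ {0}`; apply this to `g = ‖f‖ₑ`.
-/

theorem Real.lintegral_comp_mul_left (g : ℝ → ℝ≥0∞) {c : ℝ} (hc : c ≠ 0) :
    ∫⁻ x, g (c * x) = ENNReal.ofReal |c⁻¹| * ∫⁻ y, g y := by
  rw [← smul_eq_mul, ← lintegral_smul_measure, ← Real.map_volume_mul_left hc]
  exact (lintegral_map_equiv g (Homeomorph.mulLeft₀ c hc).toMeasurableEquiv).symm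

theorem ae_tendsto_zero_of_tsum_lintegral_ne_top {α : Type*} [MeasurableSpace α] {μ : Measure α}
    {F : ℕ → α → ℝ≥0∞} (hF : ∀ n, AEMeasurable (F n) μ) (h : ∑' n, ∫⁻ x, F n x ∂μ ≠ ∞) :
    ∀ᵐ x ∂μ, Tendsto (fun n ↦ F n x) atTop (𝓝 0) := by
  rw [← lintegral_tsum hF] at h
  filter_upwards [ae_lt_top' (AEMeasurable.tsum hF) h] with x hx
  exact ENNReal.tendsto_atTop_zero_of_tsum_ne_top hx.ne

theorem tsum_inv_mul_indicator_abs_div_le {a b : ℝ} (ha : 0 < a) (hb : 0 ≤ b) (y : ℝ) :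
    ∑' n : ℕ, ENNReal.ofReal ((n : ℝ) + 1)⁻¹ * (abs ⁻¹' Ioc a b).indicator 1 (y / ((n : ℝ) + 1))
      ≤ ENNReal.ofReal (b / a) := by
  set N := ⌊|y| / a⌋₊
  have hterm : ∀ n : ℕ, ENNReal.ofReal ((n : ℝ) + 1)⁻¹ *
      (abs ⁻¹' Ioc a b).indicator 1 (y / ((n : ℝ) + 1))
        ≤ if n < N then ENNReal.ofReal (b / |y|) else 0 := by
    intro n
    by_cases hn : y / ((n : ℝ) + 1) ∈ abs ⁻¹' Ioc a b
    · have hpos : (0 : ℝ) < (n : ℝ) + 1 := by positivity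
      obtain ⟨hlow, hup⟩ : a < |y| / ((n : ℝ) + 1) ∧ |y| / ((n : ℝ) + 1) ≤ b := by
        simpa [abs_div, abs_of_pos hpos] using hn
      have hy : 0 < |y| := lt_of_lt_of_le (by positivity) ((lt_div_iff₀ hpos).mp hlow).le
      have hnN : n < N := by
        rw [← Nat.add_one_le_iff, Nat.le_floor_iff (by positivity), le_div_iff₀ ha]
        push_cast
        nlinarith [(lt_div_iff₀ hpos).mp hlow]
      rw [indicator_of_mem hn, if_pos hnN, Pi.one_apply, mul_one]
      refine ENNReal.ofReal_le_ofReal ?_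
      rw [le_div_iff₀ hy, inv_mul_eq_div, div_le_iff₀ hpos]
      linarith [(div_le_iff₀ hpos).mp hup]
    · rw [indicator_of_notMem hn, mul_zero]
      exact zero_le
  calc _ ≤ ∑' n : ℕ, if n < N then ENNReal.ofReal (b / |y|) else 0 := ENNReal.tsum_le_tsum hterm
    _ = N * ENNReal.ofReal (b / |y|) := by
      rw [tsum_eq_sum (s := Finset.range N) fun n hn ↦ if_neg (by simpa using hn),
        Finset.sum_congr rfl fun n hn ↦ if_pos (Finset.mem_range.mp hn)]
      simp
    _ ≤ ENNReal.ofReal (b / a) := by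
      rw [← ENNReal.ofReal_natCast, ← ENNReal.ofReal_mul (by positivity)]
      refine ENNReal.ofReal_le_ofReal ?_
      rcases (abs_nonneg y).eq_or_lt with hy | hy
      · simp [← hy]; positivity
      calc (N : ℝ) * (b / |y|) ≤ |y| / a * (b / |y|) := by
            gcongr; exact Nat.floor_le (by positivity)
        _ = b / a := by field_simp

theorem tsum_lintegral_indicator_mul_comp_nat_mul_le {g : ℝ → ℝ≥0∞} (hg : AEMeasurable g)
    {a b : ℝ} (ha : 0 < a) (hb : 0 ≤ b) :
    ∑' n : ℕ, ∫⁻ x, (abs ⁻¹' Ioc a b).indicator 1 x * g (((n : ℝ) + 1) * x)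
      ≤ ENNReal.ofReal (b / a) * ∫⁻ y, g y := by
  have hA : MeasurableSet (abs ⁻¹' Ioc a b : Set ℝ) := measurable_abs measurableSet_Ioc
  have hscale (n : ℕ) : ∫⁻ x, (abs ⁻¹' Ioc a b).indicator 1 x * g (((n : ℝ) + 1) * x)
      = ∫⁻ y, ENNReal.ofReal ((n : ℝ) + 1)⁻¹ *
          ((abs ⁻¹' Ioc a b).indicator 1 (y / ((n : ℝ) + 1)) * g y) := by
    have hpos : (0 : ℝ) < (n : ℝ) + 1 := by positivity
    rw [lintegral_const_mul' _ _ ENNReal.ofReal_ne_top, ← abs_of_pos (inv_pos.2 hpos),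
      ← Real.lintegral_comp_mul_left _ hpos.ne']
    simp_rw [mul_div_cancel_left₀ _ hpos.ne']
  calc _ = ∫⁻ y, ∑' n : ℕ, ENNReal.ofReal ((n : ℝ) + 1)⁻¹ *
          ((abs ⁻¹' Ioc a b).indicator 1 (y / ((n : ℝ) + 1)) * g y) := by
        rw [tsum_congr hscale, lintegral_tsum fun n ↦ ?_]
        exact aemeasurable_const.mul
          (((measurable_one.indicator hA).comp (measurable_div_const _)).aemeasurable.mul hg)
    _ ≤ ∫⁻ y, ENNReal.ofReal (b / a) * g y := by
        refine lintegral_mono fun y ↦ ?_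
        simp_rw [← mul_assoc]
        rw [ENNReal.tsum_mul_right]
        exact mul_le_mul_left (tsum_inv_mul_indicator_abs_div_le ha hb y) _
    _ = ENNReal.ofReal (b / a) * ∫⁻ y, g y := lintegral_const_mul' _ _ ENNReal.ofReal_ne_top

theorem ae_tendsto_comp_nat_mul_of_lt_abs_le {g : ℝ → ℝ≥0∞} (hg : AEMeasurable g)
    (hfin : ∫⁻ y, g y ≠ ∞) {a b : ℝ} (ha : 0 < a) (hb : 0 ≤ b) :
    ∀ᵐ x, a < |x| → |x| ≤ b → Tendsto (fun n : ℕ ↦ g (((n : ℝ) + 1) * x)) atTop (𝓝 0) := by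
  have hF (n : ℕ) : AEMeasurable
      (fun x ↦ (abs ⁻¹' Ioc a b).indicator 1 x * g (((n : ℝ) + 1) * x)) :=
    (measurable_one.indicator (measurable_abs measurableSet_Ioc)).aemeasurable.mul
        (hg.comp_quasiMeasurePreserving (Measure.quasiMeasurePreserving_smul volume
        (n.cast_add_one_pos (α := ℝ)).ne'))
  filter_upwards [ae_tendsto_zero_of_tsum_lintegral_ne_top hF (ne_top_of_le_ne_top
    (ENNReal.mul_ne_top ENNReal.ofReal_ne_top hfin)
    (tsum_lintegral_indicator_mul_comp_nat_mul_le hg ha hb))] with x hx hxa hxb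
  simpa [indicator_of_mem (show x ∈ abs ⁻¹' Ioc a b from ⟨hxa, hxb⟩)] using hx

theorem ae_tendsto_comp_nat_mul {g : ℝ → ℝ≥0∞} (hg : AEMeasurable g) (hfin : ∫⁻ y, g y ≠ ∞) :
    ∀ᵐ x, Tendsto (fun n : ℕ ↦ g (n * x)) atTop (𝓝 0) := by
  have h (k : ℕ) := ae_tendsto_comp_nat_mul_of_lt_abs_le hg hfin
    (inv_pos.2 (k.cast_add_one_pos (α := ℝ))) (k.cast_add_one_pos (α := ℝ)).le
  filter_upwards [ae_all_iff.2 h, volume.ae_ne 0] with x hx hx0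
  obtain ⟨k, hk⟩ := exists_nat_gt (max |x| |x|⁻¹)
  rw [max_lt_iff] at hk
  have hlow : ((k : ℝ) + 1)⁻¹ < |x| := inv_lt_of_inv_lt₀ (abs_pos.2 hx0) (by linarith)
  refine (tendsto_add_atTop_iff_nat 1).1 ?_
  simpa using hx k hlow (by linarith)

theorem stmt0_general (f : ℝ → ℝ) (hint : Integrable f (volume : Measure ℝ)) :
    ∀ᵐ x ∂(volume : Measure ℝ),
      Tendsto (fun n : ℕ => f ((n : ℝ) * x)) atTop (nhds 0) := by
  filter_upwards [ae_tendsto_comp_nat_mul hint.aemeasurable.enorm hint.2.ne] with x hx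
  exact tendsto_zero_iff_enorm_tendsto_zero.2 hx

theorem stmt0 (f : ℝ → ℝ) (hmeas : Measurable f) (hnonneg : ∀ x, 0 ≤ f x)
    (hint : Integrable f (volume : Measure ℝ)) :
    ∀ᵐ x ∂(volume : Measure ℝ),
      Tendsto (fun n : ℕ => f ((n : ℝ) * x)) atTop (nhds 0) :=
  stmt0_general f hint
end

section
/- Let α_n = [0; a_{n1}, a_{n2}, …] ∈ (0,1) converge to α, with (a_{n1}), …, (a_{ni}) bounded. If the tail r_{ni} is not bounded away from ∞ (i.e., some subsequence has r_{ni} → ∞), then α is rational, equal to a terminating continued fraction [0; a_1, …, a_j] for some j ≤ i. Similarly if r_{ni} is not bounded away from 1. -/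
open Filter Set

/-- Numerators of the convergents of `[0; b 1, b 2, …]`, shifted:
`cfP b (j+1)` is `p_j` of the paper (`cfP b 0 = p_{-1} = 1`). -/
def cfP (b : ℕ → ℕ) : ℕ → ℤ
  | 0 => 1
  | 1 => 0
  | (n + 2) => b (n + 1) * cfP b (n + 1) + cfP b n

/-- Denominators of the convergents, shifted likewise. -/
def cfQ (b : ℕ → ℕ) : ℕ → ℤ
  | 0 => 0
  | 1 => 1
  | (n + 2) => b (n + 1) * cfQ b (n + 1) + cfQ b n

/-- Value of the nonterminating continued fraction `[0; b 1, b 2, …]`,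
as the limit of its convergents. -/
noncomputable def cfVal (b : ℕ → ℕ) : ℝ :=
  limUnder atTop (fun n => (cfP b (n + 1) : ℝ) / (cfQ b (n + 1) : ℝ))

/-- The `i`-th complete quotient (tail) `r_i = b_{i+1} + [0; b_{i+2}, …]`. -/
noncomputable def cfTail (b : ℕ → ℕ) (i : ℕ) : ℝ :=
  (b (i + 1) : ℝ) + cfVal (fun j => b (i + 1 + j))


lemma cfPdef0 (b : ℕ → ℕ) : cfP b 0 = 1 := rfl
lemma cfPdef1 (b : ℕ → ℕ) : cfP b 1 = 0 := rfl
lemma cfPdef2 (b : ℕ → ℕ) (n : ℕ) : cfP b (n+2) = b (n + 1) * cfP b (n + 1) + cfP b n := rfl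
lemma cfQdef0 (b : ℕ → ℕ) : cfQ b 0 = 0 := rfl
lemma cfQdef1 (b : ℕ → ℕ) : cfQ b 1 = 1 := rfl
lemma cfQdef2 (b : ℕ → ℕ) (n : ℕ) : cfQ b (n+2) = b (n + 1) * cfQ b (n + 1) + cfQ b n := rfl

section Basics
variable {b : ℕ → ℕ}

lemma cfP_nonneg : ∀ n, 0 ≤ cfP b n := by
  intro n
  induction n using Nat.twoStepInduction with
  | zero => simp [cfP]
  | one => simp [cfP]
  | more n ih ih' =>
    simp only [cfP]
    have : (0:ℤ) ≤ (b (n+1) : ℤ) := Int.natCast_nonneg _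
    nlinarith

lemma cfQ_nonneg : ∀ n, 0 ≤ cfQ b n := by
  intro n
  induction n using Nat.twoStepInduction with
  | zero => simp [cfQ]
  | one => simp [cfQ]
  | more n ih ih' =>
    simp only [cfQ]
    have : (0:ℤ) ≤ (b (n+1) : ℤ) := Int.natCast_nonneg _
    nlinarith

variable (hb : ∀ j, 1 ≤ j → 1 ≤ b j)
include hb

lemma cfQ_pos : ∀ n, 1 ≤ cfQ b (n + 1) := by
  intro n
  induction n using Nat.twoStepInduction with
  | zero => simp [cfQ]
  | one =>
    simp [cfQ]
    exact_mod_cast hb 1 le_rfl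
  | more n ih ih' =>
    have e : cfQ b (n + 3) = (b (n+2) : ℤ) * cfQ b (n + 2) + cfQ b (n + 1) := rfl
    show 1 ≤ cfQ b (n + 3)
    rw [e]
    have h1 : (1:ℤ) ≤ (b (n+2) : ℤ) := by exact_mod_cast hb (n+2) (by omega)
    have h2 := cfQ_nonneg (b := b) (n+1)
    nlinarith

lemma cfP_le_cfQ : ∀ n, cfP b (n + 1) ≤ cfQ b (n + 1) := by
  intro n
  induction n using Nat.twoStepInduction with
  | zero => simp [cfP, cfQ]
  | one =>
    simp [cfP, cfQ]
    exact_mod_cast hb 1 le_rfl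
  | more n ih ih' =>
    have ep : cfP b (n + 3) = (b (n+2) : ℤ) * cfP b (n + 2) + cfP b (n + 1) := rfl
    have eq : cfQ b (n + 3) = (b (n+2) : ℤ) * cfQ b (n + 2) + cfQ b (n + 1) := rfl
    show cfP b (n + 3) ≤ cfQ b (n + 3)
    rw [ep, eq]
    have h1 : (0:ℤ) ≤ (b (n+2) : ℤ) := Int.natCast_nonneg _
    nlinarith

lemma cfQ_mono (n : ℕ) : cfQ b (n + 1) ≤ cfQ b (n + 2) := by
  cases n with
  | zero =>
    simp [cfQ]
    exact_mod_cast hb 1 le_rfl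
  | succ n =>
    show cfQ b (n + 2) ≤ cfQ b (n + 3)
    have : cfQ b (n + 3) = (b (n+2) : ℤ) * cfQ b (n + 2) + cfQ b (n + 1) := rfl
    rw [this]
    have h1 : (1:ℤ) ≤ (b (n+2) : ℤ) := by exact_mod_cast hb (n+2) (by omega)
    have h2 := cfQ_nonneg (b := b) (n+1)
    have h3 := cfQ_pos hb (n+1)
    nlinarith

lemma cfQ_prod_ge (n : ℕ) : (2:ℤ) ^ n ≤ cfQ b (n + 1) * cfQ b (n + 2) := by
  induction n with
  | zero =>
    simp [cfQ]
    exact_mod_cast hb 1 le_rfl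
  | succ n ih =>
    have hrec : cfQ b (n + 3) = (b (n+2) : ℤ) * cfQ b (n + 2) + cfQ b (n + 1) := rfl
    have h1 : (1:ℤ) ≤ (b (n+2) : ℤ) := by exact_mod_cast hb (n+2) (by omega)
    have h2 := cfQ_pos hb (n+1)
    have h3 := cfQ_pos hb n
    have h4 := cfQ_mono hb n
    calc (2:ℤ) ^ (n+1) = 2 * 2 ^ n := by ring
    _ ≤ 2 * (cfQ b (n + 1) * cfQ b (n + 2)) := by linarith
    _ ≤ cfQ b (n + 2) * cfQ b (n + 3) := by
        rw [hrec]
        have h5 : cfQ b (n+1) * cfQ b (n+2) ≤ cfQ b (n+2) * cfQ b (n+2) :=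
          mul_le_mul_of_nonneg_right h4 (by linarith)
        have h6 : cfQ b (n+2) * cfQ b (n+2) ≤ (b (n+2) : ℤ) * (cfQ b (n+2) * cfQ b (n+2)) :=
          le_mul_of_one_le_left (by nlinarith) h1
        nlinarith

omit hb in
lemma cf_det : ∀ n, cfP b n * cfQ b (n + 1) - cfP b (n + 1) * cfQ b n = (-1) ^ n := by
  intro n
  induction n with
  | zero => simp [cfP, cfQ]
  | succ n ih =>
    have hp : cfP b (n + 2) = (b (n+1) : ℤ) * cfP b (n + 1) + cfP b n := rfl
    have hq : cfQ b (n + 2) = (b (n+1) : ℤ) * cfQ b (n + 1) + cfQ b n := rfl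
    rw [hp, hq, pow_succ, ← ih]
    ring

end Basics

noncomputable def cfConv (b : ℕ → ℕ) (n : ℕ) : ℝ := (cfP b (n + 1) : ℝ) / (cfQ b (n + 1) : ℝ)

section Conv
variable {b : ℕ → ℕ} (hb : ∀ j, 1 ≤ j → 1 ≤ b j)
include hb

lemma cfConv_cauchy : CauchySeq (cfConv b) := by
  apply cauchySeq_of_le_geometric (1/2 : ℝ) 1 (by norm_num)
  intro n
  have hq1 : (0:ℝ) < (cfQ b (n+1) : ℝ) := by exact_mod_cast cfQ_pos hb n
  have hq2 : (0:ℝ) < (cfQ b (n+2) : ℝ) := by exact_mod_cast cfQ_pos hb (n+1)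
  rw [Real.dist_eq, cfConv, cfConv,
    div_sub_div _ _ (ne_of_gt hq1) (ne_of_gt hq2), abs_div]
  have h2 : cfP b (n+1) * cfQ b (n+2) - cfQ b (n+1) * cfP b (n+2) = (-1:ℤ)^(n+1) := by
    have := cf_det (b := b) (n+1)
    linarith
  have hdet : (cfP b (n+1) : ℝ) * (cfQ b (n+2) : ℝ) - (cfQ b (n+1) : ℝ) * (cfP b (n+2) : ℝ)
      = (-1 : ℝ) ^ (n+1) := by exact_mod_cast h2
  simp only [show n+1+1 = n+2 from rfl]
  rw [hdet, abs_pow, abs_neg, abs_one, one_pow]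
  have habs : |(cfQ b (n+1) : ℝ) * (cfQ b (n+2) : ℝ)| = (cfQ b (n+1) : ℝ) * (cfQ b (n+2) : ℝ) :=
    abs_of_pos (mul_pos hq1 hq2)
  rw [habs]
  have hprod : (2:ℝ)^n ≤ (cfQ b (n+1) : ℝ) * (cfQ b (n+2) : ℝ) := by
    exact_mod_cast cfQ_prod_ge hb n
  rw [one_mul, div_pow, one_pow, one_div, one_div, ← one_div]
  calc (1:ℝ) / ((cfQ b (n+1) : ℝ) * (cfQ b (n+2) : ℝ)) ≤ 1 / 2^n :=
        one_div_le_one_div_of_le (by positivity) hprod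
    _ = ((2:ℝ)^n)⁻¹ := one_div _

lemma cfConv_tendsto : Tendsto (cfConv b) atTop (nhds (cfVal b)) := by
  obtain ⟨x, hx⟩ := cauchySeq_tendsto_of_complete (cfConv_cauchy hb)
  have : cfVal b = x := hx.limUnder_eq
  rw [this]; exact hx

omit hb in
lemma cfConv_nonneg (n : ℕ) : 0 ≤ cfConv b n := by
  have h1 : (0:ℝ) ≤ (cfP b (n+1) : ℝ) := by exact_mod_cast cfP_nonneg (b := b) (n+1)
  have h2 : (0:ℝ) ≤ (cfQ b (n+1) : ℝ) := by exact_mod_cast cfQ_nonneg (b := b) (n+1)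
  exact div_nonneg h1 h2

lemma cfConv_le_one (n : ℕ) : cfConv b n ≤ 1 := by
  have hq : (0:ℝ) < (cfQ b (n+1) : ℝ) := by exact_mod_cast cfQ_pos hb n
  rw [cfConv, div_le_one hq]
  exact_mod_cast cfP_le_cfQ hb n

lemma cfVal_nonneg : 0 ≤ cfVal b :=
  ge_of_tendsto' (cfConv_tendsto hb) (fun n => cfConv_nonneg n)

lemma cfVal_le_one : cfVal b ≤ 1 :=
  le_of_tendsto' (cfConv_tendsto hb) (cfConv_le_one hb)

end Conv

/-- Agreement of the first `m` partial quotients gives equal convergents up to index `m+1`. -/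
lemma cf_congr {b c : ℕ → ℕ} {m : ℕ} (h : ∀ j, 1 ≤ j → j ≤ m → b j = c j) :
    ∀ k, k ≤ m + 1 → cfP b k = cfP c k ∧ cfQ b k = cfQ c k := by
  intro k
  induction k using Nat.twoStepInduction with
  | zero => intro _; rw [cfPdef0, cfPdef0, cfQdef0, cfQdef0]; exact ⟨rfl, rfl⟩
  | one => intro _; rw [cfPdef1, cfPdef1, cfQdef1, cfQdef1]; exact ⟨rfl, rfl⟩
  | more n ih ih' =>
    intro hk
    have hbc : b (n+1) = c (n+1) := h _ (by omega) (by omega)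
    have h1 := ih (by omega)
    have h2 := ih' (by omega)
    rw [cfPdef2, cfPdef2, cfQdef2, cfQdef2, hbc, h1.1, h1.2, h2.1, h2.2]
    exact ⟨rfl, rfl⟩

/-- Matrix-style decomposition of convergents at a shift. -/
lemma cf_shift (b : ℕ → ℕ) (i : ℕ) :
    ∀ m, cfP b (i + 1 + m) = cfP b (i + 1) * cfQ (fun j => b (i + j)) (m + 1)
            + cfP b i * cfP (fun j => b (i + j)) (m + 1)
        ∧ cfQ b (i + 1 + m) = cfQ b (i + 1) * cfQ (fun j => b (i + j)) (m + 1)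
            + cfQ b i * cfP (fun j => b (i + j)) (m + 1) := by
  set c : ℕ → ℕ := fun j => b (i + j) with hc
  intro m
  induction m using Nat.twoStepInduction with
  | zero => simp [cfPdef1, cfQdef1]
  | one =>
    have e1 : i + 1 + 1 = i + 2 := rfl
    rw [e1, cfPdef2, cfQdef2, cfPdef2, cfQdef2, cfPdef0, cfPdef1, cfQdef0, cfQdef1]
    have : c 1 = b (i + 1) := by rw [hc]
    rw [this]
    constructor <;> ring
  | more n ih ih' =>
    have e1 : i + 1 + (n + 2) = (i + 1 + n) + 2 := by omega
    rw [e1, cfPdef2 b (i+1+n), cfQdef2 b (i+1+n)]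
    rw [show n+2+1 = n+1+2 from rfl, cfPdef2 c (n+1), cfQdef2 c (n+1)]
    have e2 : i + 1 + n + 1 = i + 1 + (n + 1) := by omega
    have e4 : (c (n+1+1) : ℤ) = (b (i + 1 + (n+1)) : ℤ) := by
      have : c (n+1+1) = b (i + 1 + (n+1)) := by show b (i+(n+1+1)) = _; congr 1; omega
      rw [this]
    rw [e2, e4, ih.1, ih.2, ih'.1, ih'.2]
    constructor <;> ring

section Mobius
variable {b : ℕ → ℕ} (hb : ∀ j, 1 ≤ j → 1 ≤ b j)
include hb

lemma cfVal_shift_eq (i : ℕ) :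
    cfVal b = ((cfP b (i+1) : ℝ) + (cfP b i : ℝ) * cfVal (fun j => b (i + j)))
      / ((cfQ b (i+1) : ℝ) + (cfQ b i : ℝ) * cfVal (fun j => b (i + j))) := by
  set c : ℕ → ℕ := fun j => b (i + j) with hc
  have hcb : ∀ j, 1 ≤ j → 1 ≤ c j := fun j hj => hb (i + j) (by omega)
  set x := cfVal c with hx
  have hxt : Tendsto (cfConv c) atTop (nhds x) := cfConv_tendsto hcb
  have hx0 : 0 ≤ x := cfVal_nonneg hcb
  have hQ1 : (1:ℝ) ≤ (cfQ b (i+1) : ℝ) := by exact_mod_cast cfQ_pos hb i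
  have hQ0 : (0:ℝ) ≤ (cfQ b i : ℝ) := by exact_mod_cast cfQ_nonneg (b := b) i
  have hP0 : (0:ℝ) ≤ (cfP b i : ℝ) := by exact_mod_cast cfP_nonneg (b := b) i
  have hden : (0:ℝ) < (cfQ b (i+1) : ℝ) + (cfQ b i : ℝ) * x := by nlinarith
  -- pointwise formula
  have hpt : ∀ m, cfConv b (i + m)
      = ((cfP b (i+1) : ℝ) + (cfP b i : ℝ) * cfConv c m)
        / ((cfQ b (i+1) : ℝ) + (cfQ b i : ℝ) * cfConv c m) := by
    intro m
    have hQ' : (0:ℝ) < (cfQ c (m+1) : ℝ) := by exact_mod_cast cfQ_pos hcb m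
    have hdenm : (0:ℝ) < (cfQ b (i+1) : ℝ) + (cfQ b i : ℝ) * cfConv c m := by
      have h0 : 0 ≤ cfConv c m := cfConv_nonneg m
      nlinarith
    have hid := cf_shift b i m
    have e : i + m + 1 = i + 1 + m := by omega
    have eP : (cfP b (i + m + 1) : ℝ)
        = (cfP b (i+1) : ℝ) * (cfQ c (m+1) : ℝ) + (cfP b i : ℝ) * (cfP c (m+1) : ℝ) := by
      rw [e]; exact_mod_cast congrArg (Int.cast : ℤ → ℝ) hid.1
    have eQ : (cfQ b (i + m + 1) : ℝ)
        = (cfQ b (i+1) : ℝ) * (cfQ c (m+1) : ℝ) + (cfQ b i : ℝ) * (cfP c (m+1) : ℝ) := by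
      rw [e]; exact_mod_cast congrArg (Int.cast : ℤ → ℝ) hid.2
    have hdenm' : (0:ℝ) < (cfQ b (i + m + 1) : ℝ) := by
      have := cfQ_pos hb (i + m); exact_mod_cast this
    rw [cfConv, eP, eQ]
    rw [div_eq_div_iff (by rw [← eQ]; exact (ne_of_gt hdenm')) (ne_of_gt hdenm)]
    rw [cfConv]
    field_simp
  -- two limits
  have hlhs : Tendsto (fun m => cfConv b (i + m)) atTop (nhds (cfVal b)) := by
    apply (cfConv_tendsto hb).comp
    exact tendsto_atTop_mono (fun m => Nat.le_add_left m i) tendsto_id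
  have hrhs : Tendsto (fun m => ((cfP b (i+1) : ℝ) + (cfP b i : ℝ) * cfConv c m)
        / ((cfQ b (i+1) : ℝ) + (cfQ b i : ℝ) * cfConv c m)) atTop
      (nhds (((cfP b (i+1) : ℝ) + (cfP b i : ℝ) * x)
        / ((cfQ b (i+1) : ℝ) + (cfQ b i : ℝ) * x))) := by
    exact Tendsto.div (tendsto_const_nhds.add (tendsto_const_nhds.mul hxt))
      (tendsto_const_nhds.add (tendsto_const_nhds.mul hxt)) (ne_of_gt hden)
  exact tendsto_nhds_unique (hlhs.congr hpt) hrhs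

lemma cfTail_ge_one (i : ℕ) : 1 ≤ cfTail b i := by
  have h1 : (1:ℝ) ≤ (b (i+1) : ℝ) := by exact_mod_cast hb (i+1) (by omega)
  have h2 : 0 ≤ cfVal (fun j => b (i + 1 + j)) :=
    cfVal_nonneg (fun j hj => hb (i + 1 + j) (by omega))
  rw [cfTail]; linarith

lemma cfVal_shift_tail (i : ℕ) :
    cfVal (fun j => b (i + j)) = 1 / cfTail b i := by
  set c : ℕ → ℕ := fun j => b (i + j) with hc
  have hcb : ∀ j, 1 ≤ j → 1 ≤ c j := fun j hj => hb (i + j) (by omega)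
  have key := cfVal_shift_eq hcb 1
  have e1 : cfP c 2 = 1 := by rw [cfPdef2, cfPdef1, cfPdef0]; ring
  have e2 : cfP c 1 = 0 := cfPdef1 c
  have e3 : cfQ c 2 = (c 1 : ℤ) := by rw [cfQdef2, cfQdef1, cfQdef0]; ring
  have e4 : cfQ c 1 = 1 := cfQdef1 c
  have e5 : (fun j => c (1 + j)) = (fun j => b (i + 1 + j)) := by
    funext j; show b (i + (1 + j)) = b (i + 1 + j); congr 1; omega
  have e6 : c 1 = b (i + 1) := by show b (i + 1) = b (i + 1); rfl
  rw [e1, e2, e3, e4, e5, e6] at key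
  rw [key, cfTail]
  push_cast
  norm_num

lemma cfVal_tail_formula (i : ℕ) :
    cfVal b = ((cfP b (i+1) : ℝ) * cfTail b i + (cfP b i : ℝ))
      / ((cfQ b (i+1) : ℝ) * cfTail b i + (cfQ b i : ℝ)) := by
  have hr : 1 ≤ cfTail b i := cfTail_ge_one hb i
  have hr0 : (0:ℝ) < cfTail b i := by linarith
  have key := cfVal_shift_eq hb i
  rw [cfVal_shift_tail hb i] at key
  rw [key]
  have hQ1 : (1:ℝ) ≤ (cfQ b (i+1) : ℝ) := by exact_mod_cast cfQ_pos hb i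
  have hQ0 : (0:ℝ) ≤ (cfQ b i : ℝ) := by exact_mod_cast cfQ_nonneg (b := b) i
  have hden1 : (0:ℝ) < (cfQ b (i+1) : ℝ) + (cfQ b i : ℝ) * (1 / cfTail b i) := by positivity
  have hden2 : (0:ℝ) < (cfQ b (i+1) : ℝ) * cfTail b i + (cfQ b i : ℝ) := by nlinarith
  rw [div_eq_div_iff (ne_of_gt hden1) (ne_of_gt hden2)]
  field_simp

end Mobius

/-- Pigeonhole: along any subsequence one can extract a further subsequence on which the first
`i` partial quotients are constant. -/
lemma cf_pigeon (a : ℕ → ℕ → ℕ) (i M : ℕ) (hM : ∀ n j, 1 ≤ j → j ≤ i → a n j ≤ M)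
    (φ : ℕ → ℕ) :
    ∃ ψ : ℕ → ℕ, StrictMono ψ ∧
      ∀ n m j, 1 ≤ j → j ≤ i → a (φ (ψ n)) j = a (φ (ψ m)) j := by
  set f : ℕ → (Fin i → Fin (M+1)) := fun n j =>
    ⟨a (φ n) (j.val+1), Nat.lt_succ_of_le (hM (φ n) (j.val+1) (by omega) (by omega))⟩ with hf
  obtain ⟨y, hy⟩ := Finite.exists_infinite_fiber f
  have hinf : {n | f n = y}.Infinite := by
    have h1 := Set.infinite_coe_iff.mp hy
    have h2 : f ⁻¹' {y} = {n | f n = y} := by ext n; simp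
    rwa [h2] at h1
  obtain ⟨ψ, hψ, hψy⟩ := Filter.extraction_of_frequently_atTop
    (Nat.frequently_atTop_iff_infinite.mpr hinf)
  refine ⟨ψ, hψ, fun n m j hj1 hji => ?_⟩
  have h1 : f (ψ n) = f (ψ m) := (hψy n).trans (hψy m).symm
  have h2 := congrArg Fin.val (congrFun h1 ⟨j-1, by omega⟩)
  simp only [hf] at h2
  rwa [show (j-1)+1 = j by omega] at h2

theorem stmt16 (a : ℕ → ℕ → ℕ)
    (hge : ∀ n j, 1 ≤ j → 1 ≤ a n j)
    (α : ℝ) (hconv : Tendsto (fun n => cfVal (a n)) atTop (nhds α))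
    (i : ℕ) (hi : 1 ≤ i)
    (hbdd : ∀ j, 1 ≤ j → j ≤ i → ∃ M : ℕ, ∀ n, a n j ≤ M)
    (htail : (∀ C : ℝ, ∃ᶠ n in atTop, C < cfTail (a n) i) ∨
      (∀ ε : ℝ, 0 < ε → ∃ᶠ n in atTop, cfTail (a n) i < 1 + ε)) :
    ∃ j ≤ i, ∃ b : ℕ → ℕ,
      (∀ l, 1 ≤ l → l ≤ j → 1 ≤ b l) ∧
      α = (cfP b (j + 1) : ℝ) / (cfQ b (j + 1) : ℝ) := by
  -- uniform bound on the first i partial quotients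
  obtain ⟨M, hM⟩ : ∃ M : ℕ, ∀ n j, 1 ≤ j → j ≤ i → a n j ≤ M := by
    have h1 : ∀ j : Fin i, ∃ M, ∀ n, a n (j.val+1) ≤ M :=
      fun j => hbdd (j.val+1) (by omega) (by omega)
    choose Mf hMf using h1
    refine ⟨Finset.univ.sup Mf, fun n j hj1 hji => ?_⟩
    have h2 := hMf ⟨j-1, by omega⟩ n
    rw [show (j-1)+1 = j by omega] at h2
    exact le_trans h2 (Finset.le_sup (Finset.mem_univ _))
  rcases htail with h | h
  · -- tail subsequence going to infinity
    obtain ⟨φ, hφ, hφtail⟩ :=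
      Filter.extraction_forall_of_frequently (P := fun k n => (k:ℝ) < cfTail (a n) i)
        (fun k => h k)
    obtain ⟨ψ, hψ, hagree⟩ := cf_pigeon a i M hM φ
    set σ : ℕ → ℕ := fun n => φ (ψ n) with hσdef
    set b : ℕ → ℕ := a (σ 0) with hbdef
    have hσ : StrictMono σ := hφ.comp hψ
    have hagree0 : ∀ n j, 1 ≤ j → j ≤ i → a (σ n) j = b j :=
      fun n j hj1 hji => hagree n 0 j hj1 hji
    have hPQ : ∀ n, cfP (a (σ n)) (i+1) = cfP b (i+1) ∧ cfQ (a (σ n)) (i+1) = cfQ b (i+1)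
        ∧ cfP (a (σ n)) i = cfP b i ∧ cfQ (a (σ n)) i = cfQ b i := by
      intro n
      have h1 := cf_congr (fun j hj1 hji => hagree0 n j hj1 hji) (i+1) le_rfl
      have h2 := cf_congr (fun j hj1 hji => hagree0 n j hj1 hji) i (by omega)
      exact ⟨h1.1, h1.2, h2.1, h2.2⟩
    have hform : ∀ n, cfVal (a (σ n))
        = ((cfP b (i+1) : ℝ) * cfTail (a (σ n)) i + (cfP b i : ℝ))
          / ((cfQ b (i+1) : ℝ) * cfTail (a (σ n)) i + (cfQ b i : ℝ)) := by
      intro n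
      rw [cfVal_tail_formula (hge (σ n)) i, (hPQ n).1, (hPQ n).2.1, (hPQ n).2.2.1,
        (hPQ n).2.2.2]
    have hrtop : Tendsto (fun n => cfTail (a (σ n)) i) atTop atTop := by
      have h1 : ∀ n : ℕ, ((n:ℕ):ℝ) ≤ cfTail (a (σ n)) i := by
        intro n
        have h2 : (n : ℝ) ≤ (ψ n : ℝ) := by exact_mod_cast hψ.le_apply
        exact le_trans h2 (le_of_lt (hφtail (ψ n)))
      exact tendsto_atTop_mono h1 tendsto_natCast_atTop_atTop
    have hQpos : (0:ℝ) < (cfQ b (i+1) : ℝ) := by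
      have := cfQ_pos (hge (σ 0)) i; exact_mod_cast this
    have hlim : Tendsto (fun n => ((cfP b (i+1) : ℝ) * cfTail (a (σ n)) i + (cfP b i : ℝ))
          / ((cfQ b (i+1) : ℝ) * cfTail (a (σ n)) i + (cfQ b i : ℝ))) atTop
        (nhds ((cfP b (i+1) : ℝ) / (cfQ b (i+1) : ℝ))) := by
      have hinv : Tendsto (fun n => (cfTail (a (σ n)) i)⁻¹) atTop (nhds 0) :=
        tendsto_inv_atTop_zero.comp hrtop
      have hmain : Tendsto (fun n =>
            ((cfP b (i+1) : ℝ) + (cfP b i : ℝ) * (cfTail (a (σ n)) i)⁻¹)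
            / ((cfQ b (i+1) : ℝ) + (cfQ b i : ℝ) * (cfTail (a (σ n)) i)⁻¹)) atTop
          (nhds (((cfP b (i+1) : ℝ) + (cfP b i : ℝ) * 0)
            / ((cfQ b (i+1) : ℝ) + (cfQ b i : ℝ) * 0))) :=
        Tendsto.div (tendsto_const_nhds.add (tendsto_const_nhds.mul hinv))
          (tendsto_const_nhds.add (tendsto_const_nhds.mul hinv))
          (by simpa using ne_of_gt hQpos)
      simp only [mul_zero, add_zero] at hmain
      apply hmain.congr
      intro n
      have hr1 : (1:ℝ) ≤ cfTail (a (σ n)) i := cfTail_ge_one (hge (σ n)) i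
      have hr0 : (0:ℝ) < cfTail (a (σ n)) i := lt_of_lt_of_le one_pos hr1
      field_simp
    have hαsub : Tendsto (fun n => cfVal (a (σ n))) atTop (nhds α) :=
      hconv.comp hσ.tendsto_atTop
    have hfinal : α = (cfP b (i+1) : ℝ) / (cfQ b (i+1) : ℝ) :=
      tendsto_nhds_unique hαsub (Tendsto.congr (fun n => (hform n).symm) hlim)
    exact ⟨i, le_rfl, b, fun l hl _ => hge (σ 0) l hl, hfinal⟩
  · -- tail subsequence going to 1
    obtain ⟨φ, hφ, hφtail⟩ :=
      Filter.extraction_forall_of_frequently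
        (P := fun k n => cfTail (a n) i < 1 + 1/((k:ℝ)+1))
        (fun k => h (1/((k:ℝ)+1)) (by positivity))
    obtain ⟨ψ, hψ, hagree⟩ := cf_pigeon a i M hM φ
    set σ : ℕ → ℕ := fun n => φ (ψ n) with hσdef
    set b : ℕ → ℕ := a (σ 0) with hbdef
    have hσ : StrictMono σ := hφ.comp hψ
    have hagree0 : ∀ n j, 1 ≤ j → j ≤ i → a (σ n) j = b j :=
      fun n j hj1 hji => hagree n 0 j hj1 hji
    have hPQ : ∀ n, cfP (a (σ n)) (i+1) = cfP b (i+1) ∧ cfQ (a (σ n)) (i+1) = cfQ b (i+1)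
        ∧ cfP (a (σ n)) i = cfP b i ∧ cfQ (a (σ n)) i = cfQ b i := by
      intro n
      have h1 := cf_congr (fun j hj1 hji => hagree0 n j hj1 hji) (i+1) le_rfl
      have h2 := cf_congr (fun j hj1 hji => hagree0 n j hj1 hji) i (by omega)
      exact ⟨h1.1, h1.2, h2.1, h2.2⟩
    have hform : ∀ n, cfVal (a (σ n))
        = ((cfP b (i+1) : ℝ) * cfTail (a (σ n)) i + (cfP b i : ℝ))
          / ((cfQ b (i+1) : ℝ) * cfTail (a (σ n)) i + (cfQ b i : ℝ)) := by
      intro n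
      rw [cfVal_tail_formula (hge (σ n)) i, (hPQ n).1, (hPQ n).2.1, (hPQ n).2.2.1,
        (hPQ n).2.2.2]
    have hr1 : Tendsto (fun n => cfTail (a (σ n)) i) atTop (nhds 1) := by
      apply tendsto_of_tendsto_of_tendsto_of_le_of_le (g := fun _ => (1:ℝ))
        (h := fun n : ℕ => 1 + 1/((n:ℝ)+1)) tendsto_const_nhds
      · have := tendsto_const_nhds (x := (1:ℝ)) (f := atTop (α := ℕ))
        have h2 : Tendsto (fun n : ℕ => 1 + 1/((n:ℝ)+1)) atTop (nhds (1 + 0)) :=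
          tendsto_const_nhds.add tendsto_one_div_add_atTop_nhds_zero_nat
        simpa using h2
      · exact fun n => cfTail_ge_one (hge (σ n)) i
      · intro n
        have h3 := hφtail (ψ n)
        have h4 : ((n:ℝ)+1) ≤ ((ψ n : ℝ)+1) := by
          have : (n : ℝ) ≤ (ψ n : ℝ) := by exact_mod_cast hψ.le_apply
          linarith
        have h5 : 1/((ψ n : ℝ)+1) ≤ 1/((n:ℝ)+1) :=
          one_div_le_one_div_of_le (by positivity) h4
        dsimp only
        linarith
    have hQQ : (0:ℝ) < (cfQ b (i+1) : ℝ) * 1 + (cfQ b i : ℝ) := by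
      have h1 : (1:ℤ) ≤ cfQ b (i+1) := cfQ_pos (hge (σ 0)) i
      have h2 : (0:ℤ) ≤ cfQ b i := cfQ_nonneg i
      have h1' : (1:ℝ) ≤ (cfQ b (i+1) : ℝ) := by exact_mod_cast h1
      have h2' : (0:ℝ) ≤ (cfQ b i : ℝ) := by exact_mod_cast h2
      linarith
    have hlim : Tendsto (fun n => ((cfP b (i+1) : ℝ) * cfTail (a (σ n)) i + (cfP b i : ℝ))
          / ((cfQ b (i+1) : ℝ) * cfTail (a (σ n)) i + (cfQ b i : ℝ))) atTop
        (nhds (((cfP b (i+1) : ℝ) * 1 + (cfP b i : ℝ))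
          / ((cfQ b (i+1) : ℝ) * 1 + (cfQ b i : ℝ)))) :=
      Tendsto.div ((tendsto_const_nhds.mul hr1).add tendsto_const_nhds)
        ((tendsto_const_nhds.mul hr1).add tendsto_const_nhds) (ne_of_gt hQQ)
    have hαsub : Tendsto (fun n => cfVal (a (σ n))) atTop (nhds α) :=
      hconv.comp hσ.tendsto_atTop
    have hfinal : α = ((cfP b (i+1) : ℝ) + (cfP b i : ℝ)) / ((cfQ b (i+1) : ℝ) + (cfQ b i : ℝ)) := by
      have := tendsto_nhds_unique hαsub (Tendsto.congr (fun n => (hform n).symm) hlim)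
      rw [this]; ring_nf
    -- the witness: bump the i-th partial quotient by one
    obtain ⟨m, rfl⟩ : ∃ m, i = m + 1 := ⟨i - 1, by omega⟩
    set b' : ℕ → ℕ := fun l => if l = m + 1 then b (m+1) + 1 else b l with hb'def
    have hcongr : ∀ j, 1 ≤ j → j ≤ m → b' j = b j := by
      intro j hj1 hjm
      simp only [hb'def]
      rw [if_neg (by omega)]
    have hPm := cf_congr hcongr (m+1) le_rfl
    have hPm' := cf_congr hcongr m (by omega)
    have hP' : cfP b' (m+2) = cfP b (m+2) + cfP b (m+1) := by
      rw [cfPdef2, cfPdef2, hPm.1, hPm'.1]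
      have : b' (m+1) = b (m+1) + 1 := by simp [hb'def]
      rw [this]
      push_cast
      ring
    have hQ' : cfQ b' (m+2) = cfQ b (m+2) + cfQ b (m+1) := by
      rw [cfQdef2, cfQdef2, hPm.2, hPm'.2]
      have : b' (m+1) = b (m+1) + 1 := by simp [hb'def]
      rw [this]
      push_cast
      ring
    refine ⟨m+1, le_rfl, b', ?_, ?_⟩
    · intro l hl1 _
      simp only [hb'def]
      split
      · omega
      · exact hge (σ 0) l hl1
    · rw [show m+1+1 = m+2 from rfl, hP', hQ', hfinal]
      push_cast
      ring_nf
end
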